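/- Let A be an FDDS and k ≥ 1 an integer. The monomial A X^k is injective up to isomorphism (i.e., for all FDDS X, Y, A × X^k ≅ A × Y^k implies X ≅ Y) if and only if A is cancelable. -/

import Mathlib

/-!
Lovász's counting argument: a finite system `X` is determined up to isomorphism by the numbers
`hom(C, X)` of morphisms from all finite systems `C`. Since `hom(C, X^k) = hom(C, X)^k` and
`k ≥ 1`, an isomorphism `X^k ≅ Y^k` forces `X ≅ Y`; hence if `A` is cancelable, then
`A × X^k ≅ A × Y^k` gives `X^k ≅ Y^k` and then `X ≅ Y`. Conversely `A × B ≅ A × C` propagates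
to `A × B^k ≅ A × C^k` one factor at a time, so injectivity of `A X^k` cancels `A`.
-/

/-- Isomorphism of finite dynamical systems: a bijection commuting with the maps. -/
def FddsIso {α β : Type} (f : α → α) (g : β → β) : Prop :=
  ∃ e : α ≃ β, ⇑e ∘ f = g ∘ ⇑e

/-- A state is periodic if some positive iterate fixes it. -/
def IsPeriodicState {α : Type} (f : α → α) (x : α) : Prop :=
  ∃ n > 0, f^[n] x = x

/-- The vertex set of the unroll of `(α, f)`. -/
def UnrollSet {α : Type} (f : α → α) : Set (α × ℕ) :=
  {p | IsPeriodicState f (f^[p.2] p.1)}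

/-- The parent map of the unroll. -/
def unrollMap {α : Type} (f : α → α) (q : UnrollSet f) : UnrollSet f :=
  if h : q.1.2 = 0 then q
  else ⟨(f q.1.1, q.1.2 - 1), by
    obtain ⟨⟨x, k⟩, hq⟩ := q
    simp only at h
    obtain ⟨k', rfl⟩ := Nat.exists_eq_succ_of_ne_zero h
    simpa [UnrollSet, Function.iterate_succ_apply] using hq⟩

/-- Isomorphism of unrolls. -/
def UnrollIso {α β : Type} (f : α → α) (g : β → β) : Prop :=
  ∃ φ : UnrollSet f ≃ UnrollSet g, ⇑φ ∘ unrollMap f = unrollMap g ∘ ⇑φ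

/-- Vertices of the cut at depth `n` of the unroll. -/
def CutSet {α : Type} (f : α → α) (n : ℕ) : Set (α × ℕ) :=
  {p | p ∈ UnrollSet f ∧ p.2 ≤ n}

/-- The parent map of the cut at depth `n`. -/
def cutMap {α : Type} (f : α → α) (n : ℕ) (q : CutSet f n) : CutSet f n :=
  if h : q.1.2 = 0 then q
  else ⟨(f q.1.1, q.1.2 - 1), by
    obtain ⟨⟨x, k⟩, hq⟩ := q
    obtain ⟨hq1, hq2⟩ := hq
    simp only at h hq2 ⊢
    obtain ⟨k', rfl⟩ := Nat.exists_eq_succ_of_ne_zero h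
    refine ⟨by simpa [UnrollSet, Function.iterate_succ_apply] using hq1, by omega⟩⟩

/-- Isomorphism of cuts at depth `n`. -/
def CutIso {α β : Type} (f : α → α) (g : β → β) (n : ℕ) : Prop :=
  ∃ φ : CutSet f n ≃ CutSet g n, ⇑φ ∘ cutMap f n = cutMap g n ∘ ⇑φ

/-- The states of the components whose cycle length divides `p`. -/
def DivSet {α : Type} (f : α → α) (p : ℕ) : Set α :=
  {x | ∃ N, f^[N + p] x = f^[N] x}

/-- The restriction of `f` to `DivSet f p`. -/
def divMap {α : Type} (f : α → α) (p : ℕ) (q : DivSet f p) : DivSet f p :=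
  ⟨f q.1, by
    obtain ⟨x, N, hN⟩ := q
    exact ⟨N, by
      rw [← Function.iterate_succ_apply, ← Function.iterate_succ_apply,
        Function.iterate_succ_apply', Function.iterate_succ_apply', hN]⟩⟩

/-- `k`-th power of an FDDS: map on `Fin k → α`. -/
def powMap {α : Type} (f : α → α) (k : ℕ) (v : Fin k → α) : Fin k → α := f ∘ v

/-- Evaluation of the polynomial `Σ_{i=0}^m A_i X^i` at `(α, f)`. -/
def polyEval {m : ℕ} {γ : Fin (m + 1) → Type} (g : ∀ i, γ i → γ i)
    {α : Type} (f : α → α)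
    (x : Σ i : Fin (m + 1), γ i × (Fin i.val → α)) :
    Σ i : Fin (m + 1), γ i × (Fin i.val → α) :=
  ⟨x.1, g x.1 x.2.1, f ∘ x.2.2⟩

/-- Evaluation of the constant-free polynomial `Σ_{i=1}^m A_i X^i` at `(α, f)`. -/
def polyEvalNC {m : ℕ} {γ : Fin m → Type} (g : ∀ i, γ i → γ i)
    {α : Type} (f : α → α)
    (x : Σ i : Fin m, γ i × (Fin (i.val + 1) → α)) :
    Σ i : Fin m, γ i × (Fin (i.val + 1) → α) :=
  ⟨x.1, g x.1 x.2.1, f ∘ x.2.2⟩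

/-- An FDDS is cancelable if it can be canceled from products. -/
def Cancelable {α : Type} (f : α → α) : Prop :=
  ∀ (β γ : Type) [Fintype β] [Fintype γ] (g : β → β) (h : γ → γ),
    FddsIso (Prod.map f g) (Prod.map f h) → FddsIso g h


open Function

namespace FddsIso

variable {α β γ δ : Type} {f : α → α} {g : β → β} {h : γ → γ} {d : δ → δ}

theorem of_equiv (e : α ≃ β) (he : Semiconj e f g) : FddsIso f g := ⟨e, he.comp_eq⟩

theorem exists_semiconj (H : FddsIso f g) : ∃ e : α ≃ β, Semiconj e f g :=
  let ⟨e, he⟩ := H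
  ⟨e, semiconj_iff_comp_eq.mpr he⟩

theorem refl (f : α → α) : FddsIso f f := of_equiv (Equiv.refl α) fun _ => rfl

theorem symm (H : FddsIso f g) : FddsIso g f :=
  let ⟨e, he⟩ := H.exists_semiconj
  of_equiv e.symm (he.inverse_left e.left_inv e.right_inv)

theorem trans (H₁ : FddsIso f g) (H₂ : FddsIso g h) : FddsIso f h :=
  let ⟨e₁, he₁⟩ := H₁.exists_semiconj
  let ⟨e₂, he₂⟩ := H₂.exists_semiconj
  of_equiv (e₁.trans e₂) (he₁.trans he₂)

instance : Trans (@FddsIso α β) (@FddsIso β γ) (@FddsIso α γ) := ⟨trans⟩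

theorem prodMap (H₁ : FddsIso f g) (H₂ : FddsIso h d) : FddsIso (Prod.map f h) (Prod.map g d) :=
  let ⟨e₁, he₁⟩ := H₁.exists_semiconj
  let ⟨e₂, he₂⟩ := H₂.exists_semiconj
  of_equiv (e₁.prodCongr e₂) fun x => Prod.ext (he₁ x.1) (he₂ x.2)

theorem prodMap_right_comm (f : α → α) (g : β → β) (h : γ → γ) :
    FddsIso (Prod.map (Prod.map f g) h) (Prod.map (Prod.map f h) g) :=
  of_equiv ⟨fun x => ((x.1.1, x.2), x.1.2), fun x => ((x.1.1, x.2), x.1.2),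
    fun _ => rfl, fun _ => rfl⟩ fun _ => rfl

theorem powMap_zero (f : α → α) (g : β → β) : FddsIso (powMap f 0) (powMap g 0) :=
  of_equiv (Equiv.ofUnique _ _) fun _ => Subsingleton.elim _ _

theorem prodMap_powMap_succ (f : α → α) (g : β → β) (n : ℕ) :
    FddsIso (Prod.map f (powMap g (n + 1))) (Prod.map (Prod.map f g) (powMap g n)) :=
  of_equiv (((Equiv.refl α).prodCongr (Fin.consEquiv fun _ => β).symm).trans
    (Equiv.prodAssoc α β (Fin n → β)).symm) fun _ => rfl

theorem prodMap_powMap (H : FddsIso (Prod.map f g) (Prod.map f h)) (n : ℕ) :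
    FddsIso (Prod.map f (powMap g n)) (Prod.map f (powMap h n)) := by
  induction n with
  | zero => exact (refl f).prodMap (powMap_zero g h)
  | succ n ih =>
    calc FddsIso (Prod.map f (powMap g (n + 1))) (Prod.map (Prod.map f g) (powMap g n)) :=
          prodMap_powMap_succ f g n
      FddsIso _ (Prod.map (Prod.map f h) (powMap g n)) := H.prodMap (refl _)
      FddsIso _ (Prod.map (Prod.map f (powMap g n)) h) := prodMap_right_comm f h (powMap g n)
      FddsIso _ (Prod.map (Prod.map f (powMap h n)) h) := ih.prodMap (refl h)
      FddsIso _ (Prod.map (Prod.map f h) (powMap h n)) := prodMap_right_comm f (powMap h n) h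
      FddsIso _ (Prod.map f (powMap h (n + 1))) := (prodMap_powMap_succ f h n).symm

end FddsIso

section HomCount

variable {γ δ α β : Type}

noncomputable def homCount (c : γ → γ) (f : α → α) : ℕ :=
  Nat.card {h : γ → α // Semiconj h c f}

noncomputable def injHomCount (c : γ → γ) (f : α → α) : ℕ :=
  Nat.card {h : γ → α // Semiconj h c f ∧ Injective h}

theorem homCount_powMap (c : γ → γ) (f : α → α) (k : ℕ) :
    homCount c (powMap f k) = homCount c f ^ k := by
  let e : {h : γ → Fin k → α // Semiconj h c (powMap f k)} ≃
      (Fin k → {h : γ → α // Semiconj h c f}) :=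
    { toFun := fun h i => ⟨fun z => h.1 z i, fun z => congrFun (h.2 z) i⟩
      invFun := fun h => ⟨fun z i => (h i).1 z, fun z => funext fun i => (h i).2 z⟩
      left_inv := fun _ => rfl
      right_inv := fun _ => rfl }
  rw [homCount, Nat.card_congr e, Nat.card_fun, Nat.card_fin, homCount]

theorem homCount_congr_right (c : γ → γ) {f : α → α} {g : β → β} (H : FddsIso f g) :
    homCount c f = homCount c g := by
  obtain ⟨e, he⟩ := H.exists_semiconj
  exact Nat.card_congr
    { toFun := fun h => ⟨e ∘ h.1, h.2.trans he⟩
      invFun := fun h => ⟨e.symm ∘ h.1, h.2.trans (he.inverse_left e.left_inv e.right_inv)⟩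
      left_inv := fun h => Subtype.ext (funext fun z => e.symm_apply_apply (h.1 z))
      right_inv := fun h => Subtype.ext (funext fun z => e.apply_symm_apply (h.1 z)) }

theorem injHomCount_congr_left {c : γ → γ} {d : δ → δ} (f : α → α) (H : FddsIso c d) :
    injHomCount c f = injHomCount d f := by
  obtain ⟨e, he⟩ := H.exists_semiconj
  exact Nat.card_congr
    { toFun := fun h => ⟨h.1 ∘ e.symm,
        (he.inverse_left e.left_inv e.right_inv).trans h.2.1, h.2.2.comp e.symm.injective⟩
      invFun := fun h => ⟨h.1 ∘ e, he.trans h.2.1, h.2.2.comp e.injective⟩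
      left_inv := fun h => Subtype.ext (funext fun z => congrArg h.1 (e.symm_apply_apply z))
      right_inv := fun h => Subtype.ext (funext fun z => congrArg h.1 (e.apply_symm_apply z)) }

end HomCount

instance Setoid.instFinite {γ : Type} [Finite γ] : Finite (Setoid γ) :=
  Finite.of_injective (fun s : Setoid γ => ⇑s) fun _ _ h => Setoid.eq_iff_rel_eq.mpr h

theorem Setoid.ker_comp_mk {γ α : Type} (s : Setoid γ) {j : Quotient s → α} (hj : Injective j) :
    Setoid.ker (j ∘ Quotient.mk s) = s :=
  Setoid.ext fun _ _ => hj.eq_iff.trans Quotient.eq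

theorem Setoid.card_quotient_lt {γ : Type} [Finite γ] {s : Setoid γ} (hs : s ≠ ⊥) :
    Nat.card (Quotient s) < Nat.card γ := by
  by_contra! hle
  refine hs ?_
  rw [← Setoid.ker_mk_eq s, Setoid.ker_eq_bot_iff]
  exact (Quotient.mk''_surjective.bijective_of_nat_card_le hle).1

def CompatibleSetoid {γ : Type} (c : γ → γ) : Type := {s : Setoid γ // s ≤ s.comap c}

namespace CompatibleSetoid

variable {γ α : Type} {c : γ → γ}

instance [Finite γ] : Finite (CompatibleSetoid c) := Subtype.finite

noncomputable instance [Finite γ] : Fintype (CompatibleSetoid c) := Fintype.ofFinite _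

instance : Bot (CompatibleSetoid c) := ⟨⟨⊥, fun _ _ h => congrArg c h⟩⟩

def quotMap (s : CompatibleSetoid c) : Quotient s.1 → Quotient s.1 :=
  Quotient.map c fun _ _ h => s.2 h

theorem semiconj_mk (s : CompatibleSetoid c) : Semiconj (Quotient.mk s.1) c s.quotMap :=
  fun _ => rfl

theorem fddsIso_quotMap_bot : FddsIso c (⊥ : CompatibleSetoid c).quotMap :=
  FddsIso.of_equiv Setoid.quotientBotEquiv.symm fun _ => rfl

/-- A morphism `(γ, c) → (α, f)` factors uniquely through the quotient by its kernel,
followed by an injective morphism. -/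
noncomputable def factorEquiv (c : γ → γ) (f : α → α) :
    (Σ s : CompatibleSetoid c, {j : Quotient s.1 → α // Semiconj j s.quotMap f ∧ Injective j})
      ≃ {h : γ → α // Semiconj h c f} := by
  refine Equiv.ofBijective (fun x => ⟨x.2.1 ∘ Quotient.mk x.1.1, x.1.semiconj_mk.trans x.2.2.1⟩)
    ⟨?_, fun h => ?_⟩
  · rintro ⟨s, j, hj, hj_inj⟩ ⟨t, j', hj', hj'_inj⟩ hjj'
    have hcomp : j ∘ Quotient.mk s.1 = j' ∘ Quotient.mk t.1 := congrArg Subtype.val hjj'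
    obtain rfl : s = t := Subtype.ext <| by
      rw [← Setoid.ker_comp_mk s.1 hj_inj, ← Setoid.ker_comp_mk t.1 hj'_inj, hcomp]
    obtain rfl : j = j' := Quotient.mk_surjective.injective_comp_right hcomp
    rfl
  · refine ⟨⟨⟨Setoid.ker h.1, fun a b hab => ?_⟩,
      Setoid.kerLift h.1, ?_, Setoid.kerLift_injective _⟩, rfl⟩
    · exact (h.2 a).trans ((congrArg f hab).trans (h.2 b).symm)
    · exact fun q => Quotient.inductionOn q h.2

theorem homCount_eq_sum [Finite γ] [Finite α] (c : γ → γ) (f : α → α) :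
    homCount c f = ∑ s : CompatibleSetoid c, injHomCount s.quotMap f := by
  rw [homCount, ← Nat.card_congr (factorEquiv c f), Nat.card_sigma]
  rfl

end CompatibleSetoid

section Lovasz

variable {α β : Type} [Finite α] [Finite β] {f : α → α} {g : β → β}

theorem injHomCount_eq_of_homCount_eq
    (H : ∀ (γ : Type) [Finite γ] (c : γ → γ), homCount c f = homCount c g)
    {γ : Type} [Finite γ] (c : γ → γ) : injHomCount c f = injHomCount c g := by
  classical
  induction hn : Nat.card γ using Nat.strong_induction_on generalizing γ with
  | _ n ih =>
  have hsum := H γ c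
  rw [CompatibleSetoid.homCount_eq_sum, CompatibleSetoid.homCount_eq_sum,
    Fintype.sum_eq_add_sum_compl ⊥, Fintype.sum_eq_add_sum_compl ⊥,
    ← injHomCount_congr_left f CompatibleSetoid.fddsIso_quotMap_bot,
    ← injHomCount_congr_left g CompatibleSetoid.fddsIso_quotMap_bot] at hsum
  -- The `⊥` summand is `injHomCount c _`; every other one has a source of smaller cardinality.
  have hrest : ∑ s ∈ {⊥}ᶜ, injHomCount (CompatibleSetoid.quotMap (c := c) s) f =
      ∑ s ∈ {⊥}ᶜ, injHomCount (CompatibleSetoid.quotMap (c := c) s) g := by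
    refine Finset.sum_congr rfl fun s hs => ih _ ?_ _ rfl
    have hs_ne : s.1 ≠ ⊥ := fun h =>
      Finset.mem_compl.mp hs (Finset.mem_singleton.mpr (Subtype.ext h))
    exact hn ▸ Setoid.card_quotient_lt hs_ne
  omega

theorem exists_injective_semiconj
    (H : ∀ (γ : Type) [Finite γ] (c : γ → γ), homCount c f = homCount c g) :
    ∃ h : α → β, Semiconj h f g ∧ Injective h := by
  have hpos : 0 < injHomCount f g := by
    rw [← injHomCount_eq_of_homCount_eq H f, injHomCount, Nat.card_pos_iff]
    exact ⟨⟨⟨id, Semiconj.id_left, injective_id⟩⟩, inferInstance⟩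
  obtain ⟨⟨⟨h, hh⟩⟩, -⟩ := Nat.card_pos_iff.mp hpos
  exact ⟨h, hh⟩

theorem FddsIso.of_homCount_eq
    (H : ∀ (γ : Type) [Finite γ] (c : γ → γ), homCount c f = homCount c g) : FddsIso f g := by
  obtain ⟨h, hh, h_inj⟩ := exists_injective_semiconj H
  obtain ⟨h', -, h'_inj⟩ := exists_injective_semiconj fun γ _ c => (H γ c).symm
  have h_bij : Bijective h :=
    h_inj.bijective_of_nat_card_le (Nat.card_le_card_of_injective h' h'_inj)
  exact FddsIso.of_equiv (Equiv.ofBijective h h_bij) hh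

end Lovasz

theorem FddsIso.of_powMap {α β : Type} [Finite α] [Finite β] {f : α → α} {g : β → β} {k : ℕ}
    (hk : k ≠ 0) (H : FddsIso (powMap f k) (powMap g k)) : FddsIso f g :=
  FddsIso.of_homCount_eq fun _ _ c => Nat.pow_left_injective hk <| by
    simpa only [homCount_powMap] using homCount_congr_right c H

theorem monomial_injective_iff_cancelable_general {α : Type} (a : α → α)
    (k : ℕ) (hk : 1 ≤ k) :
    (∀ (β γ : Type) [Fintype β] [Fintype γ] (x : β → β) (y : γ → γ),
      FddsIso (Prod.map a (powMap x k)) (Prod.map a (powMap y k)) → FddsIso x y)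
    ↔ Cancelable a :=
  ⟨fun hmono β γ _ _ g h hgh => hmono β γ g h (hgh.prodMap_powMap k),
    fun hcanc _ _ _ _ _ _ hxy => (hcanc _ _ _ _ hxy).of_powMap (Nat.one_le_iff_ne_zero.mp hk)⟩

/-- For `k ≥ 1`, the monomial `A X^k` is injective up to isomorphism
iff `A` is cancelable. -/
theorem monomial_injective_iff_cancelable {α : Type} [Fintype α] (a : α → α)
    (k : ℕ) (hk : 1 ≤ k) :
    (∀ (β γ : Type) [Fintype β] [Fintype γ] (x : β → β) (y : γ → γ),
      FddsIso (Prod.map a (powMap x k)) (Prod.map a (powMap y k)) → FddsIso x y)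
    ↔ Cancelable a :=
  monomial_injective_iff_cancelable_general a k hk
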